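/- Let f be continuous and strictly monotone on [a,b] with 0 < α < 1. Then for each x ∈ (a,b] there exists a unique ξ(x) ∈ [a,x] satisfying f(ξ(x)) = Γ(2-α)·I^{1-α}_{a+}f(x)·(x-a)^{α-1}. -/

import Mathlib

/-!
The kernel `t ↦ (x - t) ^ (-α)` is nonnegative and integrable on `[a, x]` with integral
`(x - a) ^ (1 - α) / (1 - α)`, while `Γ(2 - α) = (1 - α) Γ(1 - α)`. Hence the right-hand side is
the weighted mean of `f` on `[a, x]` for this kernel, which a continuous `f` attains by the
intermediate value theorem; strict monotonicity makes the point unique.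
-/

open Real Set MeasureTheory intervalIntegral

theorem exists_mul_integral_eq_integral_mul {f g : ℝ → ℝ} {a b : ℝ} (hab : a ≤ b)
    (hf : ContinuousOn f (Icc a b)) (hg : IntervalIntegrable g volume a b)
    (hg_nonneg : ∀ t ∈ Icc a b, 0 ≤ g t) :
    ∃ ξ ∈ Icc a b, f ξ * ∫ t in a..b, g t = ∫ t in a..b, f t * g t := by
  have hfg : IntervalIntegrable (fun t => f t * g t) volume a b :=
    hg.continuousOn_mul (by rwa [uIcc_of_le hab])
  obtain ⟨p, hp, hp_min⟩ := isCompact_Icc.exists_isMinOn (nonempty_Icc.2 hab) hf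
  obtain ⟨q, hq, hq_max⟩ := isCompact_Icc.exists_isMaxOn (nonempty_Icc.2 hab) hf
  have h_low : f p * ∫ t in a..b, g t ≤ ∫ t in a..b, f t * g t := by
    rw [← intervalIntegral.integral_const_mul]
    exact integral_mono_on hab (hg.const_mul _) hfg fun t ht =>
      mul_le_mul_of_nonneg_right (hp_min ht) (hg_nonneg t ht)
  have h_high : ∫ t in a..b, f t * g t ≤ f q * ∫ t in a..b, g t := by
    rw [← intervalIntegral.integral_const_mul]
    exact integral_mono_on hab hfg (hg.const_mul _) fun t ht =>
      mul_le_mul_of_nonneg_right (hq_max ht) (hg_nonneg t ht)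
  have hpq : uIcc p q ⊆ Icc a b := uIcc_subset_Icc hp hq
  obtain ⟨ξ, hξ, hfξ⟩ := intermediate_value_uIcc ((hf.mono hpq).mul continuousOn_const)
    (mem_uIcc_of_le h_low h_high)
  exact ⟨ξ, hpq hξ, hfξ⟩

theorem intervalIntegrable_sub_rpow {r : ℝ} (hr : -1 < r) (a x : ℝ) :
    IntervalIntegrable (fun t => (x - t) ^ r) volume a x := by
  simpa using ((intervalIntegrable_rpow' hr (a := 0) (b := x - a)).comp_sub_left x).symm

theorem integral_sub_rpow {r : ℝ} (hr : -1 < r) (a x : ℝ) :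
    ∫ t in a..x, (x - t) ^ r = (x - a) ^ (r + 1) / (r + 1) := by
  rw [integral_comp_sub_left (fun s => s ^ r) x, sub_self, integral_rpow (Or.inl hr),
    zero_rpow (by linarith), sub_zero]

theorem fractional_mean_value_unique_general (a b α : ℝ) (hα : α ∈ Set.Ioo (0:ℝ) 1)
    (f : ℝ → ℝ) (hf : ContinuousOn f (Set.Icc a b))
    (hmono : StrictMonoOn f (Set.Icc a b) ∨ StrictAntiOn f (Set.Icc a b)) :
    ∀ x ∈ Set.Ioc a b, ∃! ξ, ξ ∈ Set.Icc a x ∧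
      f ξ = Real.Gamma (2 - α) *
        ((1 / Real.Gamma (1 - α)) * ∫ t in a..x, f t * (x - t) ^ (-α)) *
        (x - a) ^ (α - 1) := by
  rintro x ⟨hax, hxb⟩
  have hsub : Icc a x ⊆ Icc a b := Icc_subset_Icc_right hxb
  have hr : -1 < -α := by linarith [hα.2]
  obtain ⟨ξ, hξ, hfξ⟩ := exists_mul_integral_eq_integral_mul hax.le (hf.mono hsub)
    (intervalIntegrable_sub_rpow hr a x) fun t ht => rpow_nonneg (by linarith [ht.2]) _
  have hinj : InjOn f (Icc a x) := hmono.elim (fun h => (h.mono hsub).injOn)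
    fun h => (h.mono hsub).injOn
  have hmean : Gamma (2 - α) * (1 / Gamma (1 - α) * ∫ t in a..x, f t * (x - t) ^ (-α)) *
      (x - a) ^ (α - 1) = f ξ := by
    have hpow : (x - a) ^ (1 - α) * (x - a) ^ (α - 1) = 1 := by
      rw [← rpow_add (sub_pos.2 hax)]; simp
    have hΓ : Gamma (1 - α) ≠ 0 := (Gamma_pos_of_pos (by linarith [hα.2])).ne'
    have h1α : 1 - α ≠ 0 := by linarith [hα.2]
    rw [← hfξ, integral_sub_rpow hr, neg_add_eq_sub, show 2 - α = (1 - α) + 1 by ring,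
      Gamma_add_one h1α]
    field_simp
    rw [mul_assoc, hpow, mul_one]
  exact ⟨ξ, ⟨hξ, hmean.symm⟩, fun η hη => hinj hη.1 hξ (hη.2.trans hmean)⟩

/-- For `f` continuous and strictly monotone, the fractional mean value is unique. -/
theorem fractional_mean_value_unique (a b α : ℝ) (hab : a < b) (hα : α ∈ Set.Ioo (0:ℝ) 1)
    (f : ℝ → ℝ) (hf : ContinuousOn f (Set.Icc a b))
    (hmono : StrictMonoOn f (Set.Icc a b) ∨ StrictAntiOn f (Set.Icc a b)) :
    ∀ x ∈ Set.Ioc a b, ∃! ξ, ξ ∈ Set.Icc a x ∧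
      f ξ = Real.Gamma (2 - α) *
        ((1 / Real.Gamma (1 - α)) * ∫ t in a..x, f t * (x - t) ^ (-α)) *
        (x - a) ^ (α - 1) :=
  fractional_mean_value_unique_general a b α hα f hf hmono
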